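/- Let F ∈ ℂ[x_1,…,x_n] be homogeneous of degree d, let α = a_1α_1 + ⋯ + a_nα_n ∈ T_1 be a nonzero linear form, and let a = (a_1,…,a_n) ∈ ℂ^n. Then for 0 ≤ k ≤ d, the power α^k lies in F^⊥ if and only if F vanishes to order at least d − k + 1 at the point a, i.e. every partial derivative of F of order at most d − k vanishes at a. -/

import Mathlib

/-!
Apolarity setup.  `S = ℂ[x_1,…,x_n]` and its dual ring `T = ℂ[α_1,…,α_n]` are both
realized as `MvPolynomial (Fin n) ℂ`; the apolarity action `Θ ⌟ F` (`contract Θ F`)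
lets `α_i` act as the partial differentiation operator `∂/∂x_i`.
-/

open MvPolynomial

noncomputable section Apolarity

/-- Partial derivatives on `ℂ[x_1,…,x_n]` commute. -/
lemma pderiv_pderiv_comm (n : ℕ) (i j : Fin n) (f : MvPolynomial (Fin n) ℂ) :
    pderiv i (pderiv j f) = pderiv j (pderiv i f) := by
  induction f using MvPolynomial.induction_on with
  | C a => simp
  | add p q hp hq => simp [hp, hq]
  | mul_X p k hp =>
    rcases eq_or_ne i k with rfl | hik
    · rcases eq_or_ne j i with rfl | hjk
      · rfl
      · simp only [pderiv_mul, pderiv_X_self, pderiv_X_of_ne hjk, pderiv_X_of_ne hjk.symm,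
          map_add, map_zero, map_one, Derivation.map_one_eq_zero, mul_one, mul_zero,
          add_zero, zero_add, hp]
    · rcases eq_or_ne j k with rfl | hjk
      · simp only [pderiv_mul, pderiv_X_self, pderiv_X_of_ne hik, pderiv_X_of_ne hik.symm,
          map_add, map_zero, map_one, Derivation.map_one_eq_zero, mul_one, mul_zero,
          add_zero, zero_add, hp]
      · simp only [pderiv_mul, pderiv_X_of_ne hik.symm, pderiv_X_of_ne hjk.symm, map_add,
          map_zero, mul_zero, add_zero, zero_add, hp]

variable (n : ℕ)

/-- The endomorphism `∂/∂x_i` of `S = ℂ[x_1,…,x_n]`. -/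
def derOp (i : Fin n) : Module.End ℂ (MvPolynomial (Fin n) ℂ) :=
  (pderiv i).toLinearMap

lemma derOp_commute (i j : Fin n) : Commute (derOp n i) (derOp n j) :=
  LinearMap.ext fun f => pderiv_pderiv_comm n i j f

/-- The commuting product of the operators `(∂/∂x_i)^(m i)`. -/
def piDiffHom : (Fin n → Multiplicative ℕ) →* Module.End ℂ (MvPolynomial (Fin n) ℂ) :=
  MonoidHom.noncommPiCoprod (fun i : Fin n => powersHom _ (derOp n i))
    (fun i j _ x y => ((derOp_commute n i j).pow_pow x y))

/-- The differential operator `∏ i, (∂/∂x_i)^(m i)` attached to an exponent vector `m`. -/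
def diffMonoidHom : Multiplicative (Fin n →₀ ℕ) →* Module.End ℂ (MvPolynomial (Fin n) ℂ) :=
  (piDiffHom n).comp
    (AddMonoidHom.toMultiplicative
      (Finsupp.coeFnAddHom : (Fin n →₀ ℕ) →+ (Fin n → ℕ)))

/-- The apolarity action of the dual ring `T = ℂ[α_1,…,α_n]` on `S = ℂ[x_1,…,x_n]`, as an
algebra homomorphism to differential operators: `α_i` acts as `∂/∂x_i`. -/
def apolarAlgHom :
    MvPolynomial (Fin n) ℂ →ₐ[ℂ] Module.End ℂ (MvPolynomial (Fin n) ℂ) :=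
  AddMonoidAlgebra.lift ℂ _ (Fin n →₀ ℕ) (diffMonoidHom n)

variable {n}

/-- The apolarity action `Θ ⌟ F`: apply to `F` the differential operator obtained from `Θ`
by substituting `∂/∂x_i` for the `i`-th (dual) variable. -/
def contract (Θ F : MvPolynomial (Fin n) ℂ) : MvPolynomial (Fin n) ℂ :=
  apolarAlgHom n Θ F

lemma apolarAlgHom_X (i : Fin n) : apolarAlgHom n (X i) = derOp n i := by
  classical
  have hX : (X i : MvPolynomial (Fin n) ℂ)
      = AddMonoidAlgebra.single (Finsupp.single i 1) (1 : ℂ) := rfl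
  rw [hX]
  rw [show apolarAlgHom n (AddMonoidAlgebra.single (Finsupp.single i 1) (1:ℂ))
      = (1:ℂ) • diffMonoidHom n (Multiplicative.ofAdd (Finsupp.single i 1)) from
    AddMonoidAlgebra.lift_single _ _ _]
  rw [one_smul]
  rw [diffMonoidHom]
  have harg : (AddMonoidHom.toMultiplicative
        (Finsupp.coeFnAddHom : (Fin n →₀ ℕ) →+ (Fin n → ℕ)))
        (Multiplicative.ofAdd (Finsupp.single i 1))
      = Pi.mulSingle (M := fun _ : Fin n => Multiplicative ℕ) i (Multiplicative.ofAdd 1) := by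
    funext j
    rcases eq_or_ne j i with rfl | hj
    · show Multiplicative.ofAdd ((Finsupp.single j 1 : Fin n →₀ ℕ) j)
        = Pi.mulSingle (M := fun _ : Fin n => Multiplicative ℕ) j (Multiplicative.ofAdd 1) j
      rw [Finsupp.single_eq_same, Pi.mulSingle_eq_same]
    · show Multiplicative.ofAdd ((Finsupp.single i 1 : Fin n →₀ ℕ) j)
        = Pi.mulSingle (M := fun _ : Fin n => Multiplicative ℕ) i (Multiplicative.ofAdd 1) j
      rw [Finsupp.single_eq_of_ne hj, Pi.mulSingle_eq_of_ne hj]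
      exact ofAdd_zero
  refine (congrArg (piDiffHom n) harg).trans ?_
  rw [piDiffHom]
  exact (MonoidHom.noncommPiCoprod_mulSingle _ i _).trans rfl

/-- Sanity check: the dual variable `α_i` acts on `F` as `∂F/∂x_i`. -/
@[simp] lemma contract_X (i : Fin n) (F : MvPolynomial (Fin n) ℂ) :
    contract (X i) F = pderiv i F := by
  rw [contract, apolarAlgHom_X]; rfl

/-- The apolar (annihilator) ideal `F^⊥ = {Θ ∈ T : Θ ⌟ F = 0}` of a polynomial `F`. -/
def apolarIdeal (F : MvPolynomial (Fin n) ℂ) : Ideal (MvPolynomial (Fin n) ℂ) where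
  carrier := {Θ | contract Θ F = 0}
  zero_mem' := by simp [contract]
  add_mem' := by
    intro a b ha hb
    simp only [Set.mem_setOf_eq, contract, map_add, LinearMap.add_apply] at *
    rw [ha, hb, add_zero]
  smul_mem' := by
    intro c x hx
    simp only [Set.mem_setOf_eq, smul_eq_mul, contract, map_mul, Module.End.mul_apply] at *
    rw [hx, map_zero]

@[simp] lemma mem_apolarIdeal {Θ F : MvPolynomial (Fin n) ℂ} :
    Θ ∈ apolarIdeal F ↔ contract Θ F = 0 := Iff.rfl

variable (n)

/-- The irrelevant maximal ideal `m = ⟨α_1,…,α_n⟩` of `T`. -/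
def irrIdeal : Ideal (MvPolynomial (Fin n) ℂ) :=
  Ideal.span (Set.range X)

variable {n}

/-- The homogeneous ideal `I` has a minimal generator of degree `k`, i.e. `(I/mI)_k ≠ 0`:
there is a homogeneous element of `I` of degree `k` not belonging to `m * I`. -/
def HasMinGenOfDegree (I : Ideal (MvPolynomial (Fin n) ℂ)) (k : ℕ) : Prop :=
  ∃ Θ, Θ ∈ I ∧ Θ.IsHomogeneous k ∧ Θ ∉ irrIdeal n * I

/-- The homogeneous ideal `I` has at least `r` minimal generators of degree `k`, i.e.
`dim_ℂ (I/mI)_k ≥ r`: there are `r` homogeneous degree-`k` elements of `I` that are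
linearly independent modulo `m * I`. -/
def MinGensAtLeast (I : Ideal (MvPolynomial (Fin n) ℂ)) (k r : ℕ) : Prop :=
  ∃ Θ : Fin r → MvPolynomial (Fin n) ℂ,
    (∀ i, Θ i ∈ I ∧ (Θ i).IsHomogeneous k) ∧
    ∀ c : Fin r → ℂ, (∑ i, c i • Θ i) ∈ irrIdeal n * I → ∀ i, c i = 0

/-- `F` is an `s`-fold direct sum of degree `d`: `F = F_1 + ⋯ + F_s` where the `F_i` are
nonzero degree-`d` forms in independent subspaces `V_i` of the space of linear forms with
`V = V_1 ⊕ ⋯ ⊕ V_s` (i.e. in disjoint sets of variables, up to linear change of variables;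
`F_i ∈ S^d V_i` is expressed as membership in the subalgebra generated by `V_i`). -/
def IsSFoldDirectSum (F : MvPolynomial (Fin n) ℂ) (d s : ℕ) : Prop :=
  ∃ (V : Fin s → Submodule ℂ (MvPolynomial (Fin n) ℂ))
    (G : Fin s → MvPolynomial (Fin n) ℂ),
    (∀ i, V i ≤ homogeneousSubmodule (Fin n) ℂ 1) ∧
    iSupIndep V ∧
    (⨆ i, V i) = homogeneousSubmodule (Fin n) ℂ 1 ∧
    (∀ i, G i ≠ 0 ∧ (G i).IsHomogeneous d ∧ G i ∈ Algebra.adjoin ℂ (V i : Set _)) ∧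
    F = ∑ i, G i

/-- `F` is a direct sum: `F = F₁ + F₂` with `F₁ ∈ S^d V₁`, `F₂ ∈ S^d V₂` nonzero and
`V = V₁ ⊕ V₂`. -/
def IsDirectSum (F : MvPolynomial (Fin n) ℂ) (d : ℕ) : Prop :=
  IsSFoldDirectSum F d 2

/-- `F` is a limit (as `t → 0`) of `s`-fold direct sums of degree `d`. -/
def IsLimitOfSFoldDirectSums (F : MvPolynomial (Fin n) ℂ) (d s : ℕ) : Prop :=
  ∃ G : ℂ → MvPolynomial (Fin n) ℂ,
    (∀ t : ℂ, t ≠ 0 → IsSFoldDirectSum (G t) d s) ∧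
    ∀ m : Fin n →₀ ℕ,
      Filter.Tendsto (fun t => MvPolynomial.coeff m (G t))
        (nhdsWithin (0 : ℂ) {(0 : ℂ)}ᶜ) (nhds (MvPolynomial.coeff m F))

/-- `F` is a limit of direct sums. -/
def IsLimitOfDirectSums (F : MvPolynomial (Fin n) ℂ) (d : ℕ) : Prop :=
  IsLimitOfSFoldDirectSums F d 2

/-- `F` is concise: `(F^⊥)_1 = 0`, i.e. `F` cannot be written using fewer variables. -/
def Concise (F : MvPolynomial (Fin n) ℂ) : Prop :=
  ∀ Θ : MvPolynomial (Fin n) ℂ, Θ.IsHomogeneous 1 → contract Θ F = 0 → Θ = 0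

end Apolarity

/-! For a form `H` of degree `e`, iterating Euler's identity shows that the `e`-th power of the
linear form `α_b = ∑ bᵢ αᵢ` acts on `H` as the constant `e! · H(b)`. Contraction by `α^k`
commutes with every `∂^m`. So if `α^k ⌟ F = 0` and `|m| ≤ d - k`, then `α^(d-|m|)` kills the
form `∂^m F` of degree `d - |m|`, whence `∂^m F (a) = 0`. Conversely, every derivative of order
`d - k` of the form `G = α^k ⌟ F` is `∂^m (α^k ⌟ F) = α^k ⌟ ∂^m F = k! · ∂^m F (a) = 0`, and a
form of degree `e` whose derivatives of order `e` all vanish is zero, since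
`β^e ⌟ G = e! · G(b)` for every `b`. -/

section HomogeneousForms

variable {σ R : Type*} [CommSemiring R]

lemma MvPolynomial.IsHomogeneous.degree_eq_of_mem_support {j : ℕ} {φ : MvPolynomial σ R}
    (hφ : φ.IsHomogeneous j) {m : σ →₀ ℕ} (hm : m ∈ φ.support) : m.degree = j := by
  rw [Finsupp.degree_eq_weight_one]
  exact hφ (mem_support_iff.mp hm)

variable [Fintype σ]

lemma isHomogeneous_linearForm (b : σ → R) :
    (∑ i, b i • X i : MvPolynomial σ R).IsHomogeneous 1 :=
  IsHomogeneous.sum _ _ _ fun i _ => by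
    simpa only [smul_eq_C_mul] using isHomogeneous_C_mul_X (b i) i

lemma isHomogeneous_linearForm_pow (b : σ → R) (e : ℕ) :
    ((∑ i, b i • X i) ^ e : MvPolynomial σ R).IsHomogeneous e := by
  simpa only [one_mul] using (isHomogeneous_linearForm b).pow e

end HomogeneousForms

section ApolarityLemmas

variable {n : ℕ}

lemma contract_mul (Θ Ψ F : MvPolynomial (Fin n) ℂ) :
    contract (Θ * Ψ) F = contract Θ (contract Ψ F) := by
  simp only [contract, map_mul, Module.End.mul_apply]

lemma contract_one (F : MvPolynomial (Fin n) ℂ) : contract 1 F = F := by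
  simp only [contract, map_one, Module.End.one_apply]

lemma contract_zero (Θ : MvPolynomial (Fin n) ℂ) : contract Θ 0 = 0 :=
  map_zero (apolarAlgHom n Θ)

lemma contract_comm (Θ Ψ F : MvPolynomial (Fin n) ℂ) :
    contract Θ (contract Ψ F) = contract Ψ (contract Θ F) := by
  rw [← contract_mul, mul_comm, contract_mul]

lemma contract_linearForm (b : Fin n → ℂ) (F : MvPolynomial (Fin n) ℂ) :
    contract (∑ i, b i • X i) F = ∑ i, b i • pderiv i F := by
  simp only [contract, map_sum, map_smul, apolarAlgHom_X, LinearMap.coe_sum, Finset.sum_apply,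
    LinearMap.smul_apply]
  rfl

variable {d : ℕ} {F : MvPolynomial (Fin n) ℂ}

lemma MvPolynomial.IsHomogeneous.contract_X_pow (hF : F.IsHomogeneous d) (i : Fin n) (e : ℕ) :
    (contract (X i ^ e) F).IsHomogeneous (d - e) := by
  induction e with
  | zero => simpa [contract_one] using hF
  | succ e ih =>
    rw [pow_succ', contract_mul, contract_X, Nat.sub_succ]
    exact ih.pderiv

lemma MvPolynomial.IsHomogeneous.contract_monomial (hF : F.IsHomogeneous d) (m : Fin n →₀ ℕ) :
    (contract (monomial m 1) F).IsHomogeneous (d - m.degree) := by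
  induction m using Finsupp.induction_linear generalizing d F with
  | zero => simpa [contract_one] using hF
  | add f g hf hg =>
    rw [← one_mul (1 : ℂ), ← monomial_mul, contract_mul, map_add, add_comm, ← Nat.sub_sub]
    exact hf (hg hF)
  | single i e =>
    rw [← X_pow_eq_monomial, Finsupp.degree_single]
    exact hF.contract_X_pow i e

lemma contract_eq_sum_monomial (Θ F : MvPolynomial (Fin n) ℂ) :
    contract Θ F = ∑ m ∈ Θ.support, coeff m Θ • contract (monomial m 1) F := by
  conv_lhs => rw [Θ.as_sum]
  simp only [contract, map_sum, LinearMap.coe_sum, Finset.sum_apply]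
  refine Finset.sum_congr rfl fun m _ => ?_
  rw [← LinearMap.smul_apply, ← map_smul, smul_monomial, smul_eq_mul, mul_one]

lemma isHomogeneous_contract {j : ℕ} {Θ : MvPolynomial (Fin n) ℂ}
    (hΘ : Θ.IsHomogeneous j) (hF : F.IsHomogeneous d) :
    (contract Θ F).IsHomogeneous (d - j) := by
  rw [contract_eq_sum_monomial, ← mem_homogeneousSubmodule]
  refine Submodule.sum_mem _ fun m hm => Submodule.smul_mem _ _ ?_
  rw [mem_homogeneousSubmodule, ← hΘ.degree_eq_of_mem_support hm]
  exact hF.contract_monomial m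

lemma MvPolynomial.IsHomogeneous.eval_contract_linearForm {e : ℕ} {H : MvPolynomial (Fin n) ℂ}
    (hH : H.IsHomogeneous e) (b : Fin n → ℂ) :
    eval b (contract (∑ i, b i • X i) H) = e * eval b H := by
  have euler := congrArg (eval b) hH.sum_X_mul_pderiv
  simp only [map_sum, map_mul, eval_X, nsmul_eq_mul, map_natCast] at euler
  rw [contract_linearForm]
  simpa only [map_sum, smul_eq_C_mul, map_mul, eval_C] using euler

lemma contract_linearForm_pow_eq_C {e : ℕ} {H : MvPolynomial (Fin n) ℂ}
    (hH : H.IsHomogeneous e) (b : Fin n → ℂ) :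
    contract ((∑ i, b i • X i) ^ e) H = C (e.factorial * eval b H) := by
  induction e generalizing H with
  | zero =>
    have hC : H = C (coeff 0 H) := totalDegree_eq_zero_iff_eq_C.mp
      (Nat.le_zero.mp hH.totalDegree_le)
    rw [pow_zero, contract_one, Nat.factorial_zero, Nat.cast_one, one_mul, hC, eval_C]
  | succ e ih =>
    have hH' : (contract (∑ i, b i • X i) H).IsHomogeneous e :=
      isHomogeneous_contract (isHomogeneous_linearForm b) hH
    rw [pow_succ, contract_mul, ih hH', hH.eval_contract_linearForm, Nat.factorial_succ]
    push_cast
    congr 1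
    ring

lemma eval_eq_zero_of_contract_linearForm_pow_eq_zero {k e : ℕ} {H : MvPolynomial (Fin n) ℂ}
    (hH : H.IsHomogeneous e) (hke : k ≤ e) (b : Fin n → ℂ)
    (h : contract ((∑ i, b i • X i) ^ k) H = 0) : eval b H = 0 := by
  have key := contract_linearForm_pow_eq_C hH b
  rw [← Nat.sub_add_cancel hke, pow_add, contract_mul, h, contract_zero, Nat.sub_add_cancel hke,
    eq_comm, C_eq_zero, mul_eq_zero] at key
  exact key.resolve_left (Nat.cast_ne_zero.mpr e.factorial_ne_zero)

lemma eq_zero_of_contract_monomial_eq_zero {e : ℕ} {G : MvPolynomial (Fin n) ℂ}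
    (hG : G.IsHomogeneous e) (h : ∀ m : Fin n →₀ ℕ, m.degree = e → contract (monomial m 1) G = 0) :
    G = 0 := by
  refine MvPolynomial.funext fun b => ?_
  rw [map_zero]
  refine eval_eq_zero_of_contract_linearForm_pow_eq_zero hG le_rfl b ?_
  rw [contract_eq_sum_monomial]
  refine Finset.sum_eq_zero fun m hm => ?_
  rw [h m ((isHomogeneous_linearForm_pow b e).degree_eq_of_mem_support hm), smul_zero]

end ApolarityLemmas

theorem power_in_apolar_iff_vanishing_order_general
    (n d k : ℕ) (hk : k ≤ d) (F : MvPolynomial (Fin n) ℂ) (hF : F.IsHomogeneous d)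
    (a : Fin n → ℂ) :
    ((∑ i, a i • X i : MvPolynomial (Fin n) ℂ) ^ k ∈ apolarIdeal F) ↔
    (∀ m : Fin n →₀ ℕ, (∑ i, m i) ≤ d - k →
      MvPolynomial.eval a (contract (monomial m 1) F) = 0) := by
  simp only [mem_apolarIdeal, ← Finsupp.degree_eq_sum]
  constructor
  · intro h m hm
    refine eval_eq_zero_of_contract_linearForm_pow_eq_zero (k := k) (hF.contract_monomial m)
      (by omega) a ?_
    rw [contract_comm, h, contract_zero]
  · intro h
    refine eq_zero_of_contract_monomial_eq_zero
      (isHomogeneous_contract (isHomogeneous_linearForm_pow a k) hF) fun m hm => ?_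
    have hderiv : (contract (monomial m 1) F).IsHomogeneous k := by
      simpa only [hm, Nat.sub_sub_self hk] using hF.contract_monomial m
    rw [contract_comm, contract_linearForm_pow_eq_C hderiv, h m hm.le, mul_zero, map_zero]

/-- For a homogeneous `F` of degree `d`, a nonzero linear form
`α = a₁α₁ + ⋯ + aₙαₙ` and `0 ≤ k ≤ d`:  `α^k ∈ F^⊥` iff `F` vanishes to order at least
`d - k + 1` at `a`, i.e. every partial derivative of `F` of order at most `d - k`
vanishes at `a`. -/
theorem power_in_apolar_iff_vanishing_order
    (n d k : ℕ) (hk : k ≤ d) (F : MvPolynomial (Fin n) ℂ) (hF : F.IsHomogeneous d)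
    (a : Fin n → ℂ) (ha : a ≠ 0) :
    ((∑ i, a i • X i : MvPolynomial (Fin n) ℂ) ^ k ∈ apolarIdeal F) ↔
    (∀ m : Fin n →₀ ℕ, (∑ i, m i) ≤ d - k →
      MvPolynomial.eval a (contract (monomial m 1) F) = 0) :=
  power_in_apolar_iff_vanishing_order_general n d k hk F hF a
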